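/- arXiv:1207.3684 — 2 statements merged into one kernel-verified Lean document; each statement's English description precedes it below -/
import Mathlib

section
/- Let R be a commutative ring with 1 and let M be a free R-module of rank 2 with basis {x, y}. The endomorphism σ_{(23)} + σ_{(234)} of M^{⊗4} (where σ denotes the permutation action on tensor factors) induces a well-defined R-linear map τ : Sym²(Sym²M) → Sym²(⋀²M), and the composite τ ∘ i equals multiplication by 3 on Sym²(⋀²M), where i : Sym²(⋀²M) → Sym²(Sym²M) is the canonical inclusion determined by i((x∧y)·(x∧y)) = (x·x)·(y·y) − (x·y)·(x·y). Explicitly, τ((x·x)·(y·y) − (x·y)·(x·y)) = 3·(x∧y)·(x∧y). -/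
open scoped TensorProduct

/-- The submodule of relations defining the symmetric power: differences of pure tensors
related by a permutation of the factors. -/
def symRel (R : Type*) [CommRing R] (n : ℕ) (M : Type*) [AddCommGroup M] [Module R M] :
    Submodule R (⨂[R]^n M) :=
  Submodule.span R {x | ∃ (σ : Equiv.Perm (Fin n)) (v : Fin n → M),
    x = PiTensorProduct.tprod R v - PiTensorProduct.tprod R (v ∘ σ)}

/-- The `n`-th symmetric power of the `R`-module `M`: the quotient of the `n`-fold tensor
power by the permutation action of the symmetric group. -/
def SymPow (R : Type*) [CommRing R] (n : ℕ) (M : Type*) [AddCommGroup M] [Module R M] :=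
  (⨂[R]^n M) ⧸ symRel R n M

noncomputable instance (R : Type*) [CommRing R] (n : ℕ) (M : Type*) [AddCommGroup M] [Module R M] :
    AddCommGroup (SymPow R n M) :=
  inferInstanceAs (AddCommGroup ((⨂[R]^n M) ⧸ symRel R n M))

noncomputable instance (R : Type*) [CommRing R] (n : ℕ) (M : Type*) [AddCommGroup M] [Module R M] :
    Module R (SymPow R n M) :=
  inferInstanceAs (Module R ((⨂[R]^n M) ⧸ symRel R n M))

/-- The canonical quotient map from the tensor power to the symmetric power. -/
noncomputable def SymPow.mk (R : Type*) [CommRing R] (n : ℕ) (M : Type*) [AddCommGroup M] [Module R M] :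
    (⨂[R]^n M) →ₗ[R] SymPow R n M :=
  (symRel R n M).mkQ

/-- The product `v 0 · v 1 · ⋯ · v (n-1)` in the symmetric power `SymPow R n M`. -/
noncomputable def SymPow.prod (R : Type*) [CommRing R] {n : ℕ} {M : Type*} [AddCommGroup M] [Module R M]
    (v : Fin n → M) : SymPow R n M :=
  SymPow.mk R n M (PiTensorProduct.tprod R v)

/-- The wedge `v 0 ∧ v 1 ∧ ⋯ ∧ v (n-1)`, as an element of the `n`-th exterior power
`⋀[R]^n M`. -/
noncomputable def wedgeMk (R : Type*) [CommRing R] {n : ℕ} {M : Type*} [AddCommGroup M] [Module R M]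
    (v : Fin n → M) : ⋀[R]^n M :=
  ⟨ExteriorAlgebra.ιMulti R n v, ExteriorAlgebra.ιMulti_range R n (Set.mem_range_self v)⟩

/-!
The map `τ` sends `(a·b)·(c·d)` to `(a∧c)·(b∧d) + (a∧d)·(b∧c)`. This 4-linear expression is
symmetric under `a ↔ b` and under `c ↔ d`, and also under `(a·b) ↔ (c·d)` because the wedge is
antisymmetric and the two resulting signs cancel; so it descends to `Sym² (Sym² M)`.
On `x²·y² - (x·y)²` it gives `2 (x∧y)² - (x∧x)·(y∧y) - (x∧y)·(y∧x) = 3 (x∧y)²`, and when `M` has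
rank two `Sym² (⋀² M)` is generated by `(x∧y)²`, so `τ ∘ i = 3`.
-/

lemma Matrix.update_vecCons_two_zero {α : Type*} (a b x : α) :
    Function.update ![a, b] 0 x = ![x, b] := by
  ext i; fin_cases i <;> rfl

lemma Matrix.update_vecCons_two_one {α : Type*} (a b x : α) :
    Function.update ![a, b] 1 x = ![a, x] := by
  ext i; fin_cases i <;> rfl

section FinTwo

variable {R : Type*} [CommRing R] {N T : Type*} [AddCommGroup N] [Module R N]
  [AddCommGroup T] [Module R T]

def MultilinearMap.curryFinTwo (f : MultilinearMap R (fun _ : Fin 2 => N) T) :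
    N →ₗ[R] N →ₗ[R] T :=
  LinearMap.mk₂ R (fun a b => f ![a, b])
    (fun a a' b => by
      simpa only [Matrix.update_vecCons_two_zero] using f.map_update_add ![a, b] 0 a a')
    (fun r a b => by
      simpa only [Matrix.update_vecCons_two_zero] using f.map_update_smul ![a, b] 0 r a)
    (fun a b b' => by
      simpa only [Matrix.update_vecCons_two_one] using f.map_update_add ![a, b] 1 b b')
    (fun r a b => by
      simpa only [Matrix.update_vecCons_two_one] using f.map_update_smul ![a, b] 1 r b)

def LinearMap.uncurryFinTwo (f : N →ₗ[R] N →ₗ[R] T) :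
    MultilinearMap R (fun _ : Fin 2 => N) T where
  toFun v := f (v 0) (v 1)
  map_update_add' v i x y := by fin_cases i <;> simp
  map_update_smul' v i r x := by fin_cases i <;> simp

end FinTwo

namespace SymPow

variable {R : Type*} [CommRing R] {n : ℕ} {N T : Type*} [AddCommGroup N] [Module R N]
  [AddCommGroup T] [Module R T]

lemma prod_comp_perm (v : Fin n → N) (σ : Equiv.Perm (Fin n)) :
    SymPow.prod R (v ∘ σ) = SymPow.prod R v := by
  refine ((Submodule.Quotient.eq _).2 (Submodule.subset_span ?_)).symm
  exact ⟨σ, v, rfl⟩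

def lift (f : MultilinearMap R (fun _ : Fin n => N) T)
    (hf : ∀ (v : Fin n → N) (σ : Equiv.Perm (Fin n)), f (v ∘ σ) = f v) :
    SymPow R n N →ₗ[R] T :=
  (symRel R n N).liftQ (PiTensorProduct.lift f) <| by
    rw [symRel, Submodule.span_le]
    rintro _ ⟨σ, v, rfl⟩
    simp [hf]

@[simp]
lemma lift_prod (f : MultilinearMap R (fun _ : Fin n => N) T)
    (hf : ∀ (v : Fin n → N) (σ : Equiv.Perm (Fin n)), f (v ∘ σ) = f v) (v : Fin n → N) :
    lift f hf (SymPow.prod R v) = f v :=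
  PiTensorProduct.lift.tprod v

lemma hom_ext {g h : SymPow R n N →ₗ[R] T}
    (H : ∀ v : Fin n → N, g (SymPow.prod R v) = h (SymPow.prod R v)) : g = h :=
  Submodule.linearMap_qext _ (PiTensorProduct.ext (MultilinearMap.ext H))

variable (R N) in
noncomputable def mul : N →ₗ[R] N →ₗ[R] SymPow R 2 N :=
  ((SymPow.mk R 2 N).compMultilinearMap (PiTensorProduct.tprod R)).curryFinTwo

lemma mul_apply (a b : N) : mul R N a b = SymPow.prod R ![a, b] := rfl

lemma mul_comm (a b : N) : mul R N a b = mul R N b a := by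
  simpa [mul_apply] using (prod_comp_perm (R := R) ![a, b] (Equiv.swap 0 1)).symm

noncomputable def lift₂ (f : N →ₗ[R] N →ₗ[R] T) (hf : ∀ a b, f a b = f b a) :
    SymPow R 2 N →ₗ[R] T :=
  lift f.uncurryFinTwo fun v σ => by
    obtain rfl | rfl : σ = 1 ∨ σ = Equiv.swap 0 1 := by revert σ; decide
    · rfl
    · exact hf _ _

@[simp]
lemma lift₂_mul (f : N →ₗ[R] N →ₗ[R] T) (hf : ∀ a b, f a b = f b a) (a b : N) :
    lift₂ f hf (mul R N a b) = f a b :=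
  lift_prod _ _ _

@[ext]
lemma hom_ext₂ {g h : SymPow R 2 N →ₗ[R] T} (H : ∀ a b, g (mul R N a b) = h (mul R N a b)) :
    g = h :=
  hom_ext fun v => by rw [← FinVec.etaExpand_eq v]; exact H (v 0) (v 1)

noncomputable def lift₂₂ (Φ : N →ₗ[R] N →ₗ[R] N →ₗ[R] N →ₗ[R] T)
    (h₁ : ∀ a b, Φ a b = Φ b a) (h₂ : ∀ a b c d, Φ a b c d = Φ a b d c) :
    SymPow R 2 N →ₗ[R] SymPow R 2 N →ₗ[R] T :=
  let E := lift₂ Φ h₁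
  (lift₂ (LinearMap.lflip.toLinearMap ∘ₗ E.flip) fun c d => by
    ext a b
    simpa [E] using h₂ a b c d).flip

@[simp]
lemma lift₂₂_mul_mul (Φ : N →ₗ[R] N →ₗ[R] N →ₗ[R] N →ₗ[R] T)
    (h₁ : ∀ a b, Φ a b = Φ b a) (h₂ : ∀ a b c d, Φ a b c d = Φ a b d c) (a b c d : N) :
    lift₂₂ Φ h₁ h₂ (mul R N a b) (mul R N c d) = Φ a b c d := by
  simp [lift₂₂]

lemma lift₂₂_comm (Φ : N →ₗ[R] N →ₗ[R] N →ₗ[R] N →ₗ[R] T)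
    (h₁ : ∀ a b, Φ a b = Φ b a) (h₂ : ∀ a b c d, Φ a b c d = Φ a b d c)
    (h₃ : ∀ a b c d, Φ a b c d = Φ c d a b) (s t : SymPow R 2 N) :
    lift₂₂ Φ h₁ h₂ s t = lift₂₂ Φ h₁ h₂ t s := by
  have : lift₂₂ Φ h₁ h₂ = (lift₂₂ Φ h₁ h₂).flip := by
    ext a b c d
    simpa using h₃ a b c d
  exact LinearMap.congr_fun₂ this s t

noncomputable def liftSymSym (Φ : N →ₗ[R] N →ₗ[R] N →ₗ[R] N →ₗ[R] T)
    (h₁ : ∀ a b, Φ a b = Φ b a) (h₂ : ∀ a b c d, Φ a b c d = Φ a b d c)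
    (h₃ : ∀ a b c d, Φ a b c d = Φ c d a b) :
    SymPow R 2 (SymPow R 2 N) →ₗ[R] T :=
  lift₂ (lift₂₂ Φ h₁ h₂) (lift₂₂_comm Φ h₁ h₂ h₃)

@[simp]
lemma liftSymSym_mul_mul (Φ : N →ₗ[R] N →ₗ[R] N →ₗ[R] N →ₗ[R] T)
    (h₁ : ∀ a b, Φ a b = Φ b a) (h₂ : ∀ a b c d, Φ a b c d = Φ a b d c)
    (h₃ : ∀ a b c d, Φ a b c d = Φ c d a b) (a b c d : N) :
    liftSymSym Φ h₁ h₂ h₃ (mul R _ (mul R N a b) (mul R N c d)) = Φ a b c d := by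
  simp [liftSymSym]

lemma hom_ext_of_span_singleton {z : N} (hz : Submodule.span R {z} = ⊤)
    {g h : SymPow R 2 N →ₗ[R] T} (H : g (mul R N z z) = h (mul R N z z)) : g = h := by
  have hspan (a : N) : ∃ r : R, r • z = a :=
    Submodule.mem_span_singleton.1 (hz ▸ Submodule.mem_top)
  ext a b
  obtain ⟨r, rfl⟩ := hspan a
  obtain ⟨s, rfl⟩ := hspan b
  simp [H]

end SymPow

lemma LinearMap.IsAlt.apply_eq_det_smul {R M X : Type*} [CommRing R] [AddCommGroup M] [Module R M]
    [AddCommGroup X] [Module R X] {f : M →ₗ[R] M →ₗ[R] X} (hf : f.IsAlt)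
    (b : Module.Basis (Fin 2) R M) (u v : M) :
    f u v = b.det ![u, v] • f (b 0) (b 1) := by
  have hu := b.sum_repr u
  have hv := b.sum_repr v
  rw [Fin.sum_univ_two] at hu hv
  conv_lhs => rw [← hu, ← hv]
  simp only [Module.Basis.det_apply, Matrix.det_fin_two, Module.Basis.toMatrix_apply,
    Matrix.cons_val_zero, Matrix.cons_val_one, map_add, map_smul, LinearMap.add_apply,
    LinearMap.smul_apply, hf.self_eq_zero, ← hf.neg (b 0) (b 1)]
  module

section Wedge

variable (R : Type*) [CommRing R] (M : Type*) [AddCommGroup M] [Module R M]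

noncomputable def wedge₂ : M →ₗ[R] M →ₗ[R] ⋀[R]^2 M :=
  (exteriorPower.ιMulti R 2).toMultilinearMap.curryFinTwo

variable {R M}

lemma wedge₂_isAlt : (wedge₂ R M).IsAlt := fun a =>
  (exteriorPower.ιMulti R 2).map_eq_zero_of_eq ![a, a] (i := 0) (j := 1) rfl (by decide)

lemma span_wedge₂_basis (b : Module.Basis (Fin 2) R M) :
    Submodule.span R {wedge₂ R M (b 0) (b 1)} = ⊤ := by
  rw [eq_top_iff, ← exteriorPower.ιMulti_span, Submodule.span_le]
  rintro _ ⟨v, rfl⟩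
  rw [← FinVec.etaExpand_eq v]
  exact Submodule.mem_span_singleton.2 ⟨_, (wedge₂_isAlt.apply_eq_det_smul b (v 0) (v 1)).symm⟩

end Wedge

section Tau

open SymPow

variable {R : Type*} [CommRing R] {M X : Type*} [AddCommGroup M] [Module R M]
  [AddCommGroup X] [Module R X]

noncomputable def crossProducts (w : M →ₗ[R] M →ₗ[R] X) :
    M →ₗ[R] M →ₗ[R] M →ₗ[R] M →ₗ[R] SymPow R 2 X :=
  LinearMap.mk₂ R
    (fun a b => (mul R X).compl₁₂ (w a) (w b) + ((mul R X).compl₁₂ (w a) (w b)).flip)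
    (fun a a' b => by
      ext
      simp only [map_add, LinearMap.add_apply, LinearMap.compl₁₂_apply, LinearMap.flip_apply]
      abel)
    (fun r a b => by ext; simp)
    (fun a b b' => by
      ext
      simp only [map_add, LinearMap.add_apply, LinearMap.compl₁₂_apply, LinearMap.flip_apply]
      abel)
    (fun r a b => by ext; simp)

lemma crossProducts_apply (w : M →ₗ[R] M →ₗ[R] X) (a b c d : M) :
    crossProducts w a b c d = mul R X (w a c) (w b d) + mul R X (w a d) (w b c) := rfl

noncomputable def tau (w : M →ₗ[R] M →ₗ[R] X) (hw : w.IsAlt) :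
    SymPow R 2 (SymPow R 2 M) →ₗ[R] SymPow R 2 X :=
  liftSymSym (crossProducts w)
    (fun a b => by ext c d; simp only [crossProducts_apply, SymPow.mul_comm (w a _), add_comm])
    (fun a b c d => by simp only [crossProducts_apply, add_comm])
    (fun a b c d => by
      simp only [crossProducts_apply, ← hw.neg c a, ← hw.neg d b, ← hw.neg c b, ← hw.neg d a,
        map_neg, LinearMap.neg_apply, neg_neg, SymPow.mul_comm (w d a)])

lemma tau_mul_mul (w : M →ₗ[R] M →ₗ[R] X) (hw : w.IsAlt) (a b c d : M) :
    tau w hw (mul R _ (mul R M a b) (mul R M c d)) =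
      mul R X (w a c) (w b d) + mul R X (w a d) (w b c) :=
  liftSymSym_mul_mul _ _ _ _ a b c d

lemma tau_sq_sub_sq (w : M →ₗ[R] M →ₗ[R] X) (hw : w.IsAlt) (x y : M) :
    tau w hw (mul R _ (mul R M x x) (mul R M y y) - mul R _ (mul R M x y) (mul R M x y)) =
      3 • mul R X (w x y) (w x y) := by
  rw [map_sub, tau_mul_mul, tau_mul_mul, hw.self_eq_zero, ← hw.neg x y]
  simp only [map_zero, LinearMap.zero_apply, map_neg]
  abel

end Tau

theorem stmt15 {R M : Type*} [CommRing R] [AddCommGroup M] [Module R M]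
    (b : Module.Basis (Fin 2) R M) :
    ∃ τ : SymPow R 2 (SymPow R 2 M) →ₗ[R] SymPow R 2 (⋀[R]^2 M),
      (∀ v : Fin 4 → M,
        τ (SymPow.prod R ![SymPow.prod R ![v 0, v 1], SymPow.prod R ![v 2, v 3]]) =
          SymPow.prod R ![wedgeMk R ![v 0, v 2], wedgeMk R ![v 1, v 3]]
          + SymPow.prod R ![wedgeMk R ![v 0, v 3], wedgeMk R ![v 1, v 2]]) ∧
      (∀ i : SymPow R 2 (⋀[R]^2 M) →ₗ[R] SymPow R 2 (SymPow R 2 M),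
        (i (SymPow.prod R ![wedgeMk R ![b 0, b 1], wedgeMk R ![b 0, b 1]]) =
          SymPow.prod R ![SymPow.prod R ![b 0, b 0], SymPow.prod R ![b 1, b 1]]
          - SymPow.prod R ![SymPow.prod R ![b 0, b 1], SymPow.prod R ![b 0, b 1]]) →
        τ ∘ₗ i = (3 : ℕ) • LinearMap.id) ∧
      τ (SymPow.prod R ![SymPow.prod R ![b 0, b 0], SymPow.prod R ![b 1, b 1]]
          - SymPow.prod R ![SymPow.prod R ![b 0, b 1], SymPow.prod R ![b 0, b 1]]) =
        (3 : ℕ) • SymPow.prod R ![wedgeMk R ![b 0, b 1], wedgeMk R ![b 0, b 1]] := by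
  have hτ := tau_sq_sub_sq (wedge₂ R M) wedge₂_isAlt (b 0) (b 1)
  refine ⟨tau (wedge₂ R M) wedge₂_isAlt, fun v => tau_mul_mul _ _ _ _ _ _, fun i hi => ?_, hτ⟩
  refine SymPow.hom_ext_of_span_singleton (span_wedge₂_basis b) ?_
  exact (congrArg _ hi).trans hτ
end

section
/- Let R be a commutative ring with 1 and let M be an R-module. With α₁ : ⋀⁴M → Sym²(⋀²M) induced by id − σ_{(23)} + σ_{(234)}, α₃ : Sym²(Sym²M) → Sym⁴M induced by the identity of M^{⊗4}, β₃ : Sym⁴M → Sym²(Sym²M) induced by id + σ_{(23)} + σ_{(234)}, and β₁ : Sym²(⋀²M) → ⋀⁴M induced by the identity of M^{⊗4}, the composites satisfy β₁ ∘ α₁ = 3 · id_{⋀⁴M} and α₃ ∘ β₃ = 3 · id_{Sym⁴M}. -/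
open scoped TensorProduct

/-!
Both composites are determined by their values on the generators `wedgeMk R v` and
`SymPow.prod R v`. On a generator each composite returns a sum, signed in the exterior case,
of the generator evaluated at `v`, `v ∘ (1 2)` and `v ∘ (1 3)(2 3)` (positions in `Fin 4`): in `⋀⁴M` the sign of the transposition cancels the minus
sign in `α₁`, and in `Sym⁴M` reordering changes nothing, so both give three times the generator.
-/

section

variable {R M N : Type*} [CommRing R] [AddCommGroup M] [Module R M] [AddCommGroup N] [Module R N]

lemma wedgeMk_eq_ιMulti {n : ℕ} (v : Fin n → M) : wedgeMk R v = exteriorPower.ιMulti R n v :=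
  rfl

lemma wedgeMk_comp_perm {n : ℕ} (σ : Equiv.Perm (Fin n)) (v : Fin n → M) :
    wedgeMk R (v ∘ σ) = Equiv.Perm.sign σ • wedgeMk R v := by
  simp only [wedgeMk_eq_ιMulti, AlternatingMap.map_perm]

lemma exteriorPower.linearMap_ext_wedgeMk {n : ℕ} {f g : ⋀[R]^n M →ₗ[R] N}
    (h : ∀ v : Fin n → M, f (wedgeMk R v) = g (wedgeMk R v)) : f = g :=
  exteriorPower.linearMap_ext (AlternatingMap.ext h)

lemma SymPow.prod_comp_perm_s18 {n : ℕ} (σ : Equiv.Perm (Fin n)) (v : Fin n → M) :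
    SymPow.prod R (v ∘ σ) = SymPow.prod R v :=
  ((Submodule.Quotient.eq (symRel R n M)).2 (Submodule.subset_span ⟨σ, v, rfl⟩)).symm

lemma SymPow.linearMap_ext {n : ℕ} {f g : SymPow R n M →ₗ[R] N}
    (h : ∀ v : Fin n → M, f (SymPow.prod R v) = g (SymPow.prod R v)) : f = g :=
  Submodule.linearMap_qext _ (PiTensorProduct.ext (MultilinearMap.ext h))

end

theorem stmt18 {R M : Type*} [CommRing R] [AddCommGroup M] [Module R M]
    (α₁ : (⋀[R]^4 M) →ₗ[R] SymPow R 2 (⋀[R]^2 M))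
    (hα₁ : ∀ v : Fin 4 → M,
      α₁ (wedgeMk R v) =
        SymPow.prod R ![wedgeMk R ![v 0, v 1], wedgeMk R ![v 2, v 3]]
        - SymPow.prod R ![wedgeMk R ![v 0, v 2], wedgeMk R ![v 1, v 3]]
        + SymPow.prod R ![wedgeMk R ![v 0, v 3], wedgeMk R ![v 1, v 2]])
    (α₃ : SymPow R 2 (SymPow R 2 M) →ₗ[R] SymPow R 4 M)
    (hα₃ : ∀ v : Fin 4 → M,
      α₃ (SymPow.prod R ![SymPow.prod R ![v 0, v 1], SymPow.prod R ![v 2, v 3]]) =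
        SymPow.prod R v)
    (β₃ : SymPow R 4 M →ₗ[R] SymPow R 2 (SymPow R 2 M))
    (hβ₃ : ∀ v : Fin 4 → M,
      β₃ (SymPow.prod R v) =
        SymPow.prod R ![SymPow.prod R ![v 0, v 1], SymPow.prod R ![v 2, v 3]]
        + SymPow.prod R ![SymPow.prod R ![v 0, v 2], SymPow.prod R ![v 1, v 3]]
        + SymPow.prod R ![SymPow.prod R ![v 0, v 3], SymPow.prod R ![v 1, v 2]])
    (β₁ : SymPow R 2 (⋀[R]^2 M) →ₗ[R] (⋀[R]^4 M))
    (hβ₁ : ∀ v : Fin 4 → M,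
      β₁ (SymPow.prod R ![wedgeMk R ![v 0, v 1], wedgeMk R ![v 2, v 3]]) =
        wedgeMk R v) :
    β₁ ∘ₗ α₁ = (3 : ℕ) • LinearMap.id ∧ α₃ ∘ₗ β₃ = (3 : ℕ) • LinearMap.id := by
  set σ : Equiv.Perm (Fin 4) := Equiv.swap 1 2
  set τ : Equiv.Perm (Fin 4) := Equiv.swap 1 3 * Equiv.swap 2 3
  have hσ (v : Fin 4 → M) : ![v 0, v 2, v 1, v 3] = v ∘ σ := by ext i; fin_cases i <;> rfl
  have hτ (v : Fin 4 → M) : ![v 0, v 3, v 1, v 2] = v ∘ τ := by ext i; fin_cases i <;> rfl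
  have sign_σ : Equiv.Perm.sign σ = -1 := by decide
  have sign_τ : Equiv.Perm.sign τ = 1 := by decide
  constructor
  · refine exteriorPower.linearMap_ext_wedgeMk fun v => ?_
    have h₂ := hβ₁ ![v 0, v 2, v 1, v 3]
    have h₃ := hβ₁ ![v 0, v 3, v 1, v 2]
    simp only [Matrix.cons_val] at h₂ h₃
    rw [hσ, wedgeMk_comp_perm, sign_σ, Units.neg_smul, one_smul] at h₂
    rw [hτ, wedgeMk_comp_perm, sign_τ, one_smul] at h₃
    simp only [LinearMap.comp_apply, hα₁, map_add, map_sub, hβ₁ v, h₂, h₃,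
      LinearMap.smul_apply, LinearMap.id_apply]
    module
  · refine SymPow.linearMap_ext fun v => ?_
    have h₂ := hα₃ ![v 0, v 2, v 1, v 3]
    have h₃ := hα₃ ![v 0, v 3, v 1, v 2]
    simp only [Matrix.cons_val] at h₂ h₃
    rw [hσ, SymPow.prod_comp_perm_s18] at h₂
    rw [hτ, SymPow.prod_comp_perm_s18] at h₃
    simp only [LinearMap.comp_apply, hβ₃, map_add, hα₃ v, h₂, h₃,
      LinearMap.smul_apply, LinearMap.id_apply]
    module
end
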